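/- Assume there exists an integer d₀ ≥ 2 such that ω(Φ_d(2)) ≤ 10·log d holds for every integer d ≥ d₀. Then there exists a constant C > 0 such that for every integer N ≥ 2, τ(2^N − 1) ≤ 2^{C·τ(N)·(log N)²}. -/

import Mathlib

/-!
Since `2^N - 1 = ∏_{d ∣ N} Φ_d(2)`, the number of prime factors of `2^N - 1` is at most the sum
of `ω(Φ_d(2))` over the `τ(N)` divisors `d` of `N`, and the hypothesis bounds each summand by
`O(log N)`. On the other hand every prime occurs in `2^N - 1 < 2^N` with exponent less than `N`,
so `τ(2^N - 1) ≤ N^{ω(2^N - 1)} = 2^{ω(2^N - 1) log₂ N}`.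
-/

/-- `τ(n)`: the number of positive divisors of `n`. -/
def tau (n : ℕ) : ℕ := n.divisors.card

/-- `ω(n)`: the number of distinct prime factors of `n`. -/
def omega (n : ℕ) : ℕ := n.primeFactors.card

/-- `Φ_d(2)`: the value of the `d`-th cyclotomic polynomial at `2`, as a natural number. -/
noncomputable def Phi2 (d : ℕ) : ℕ := ((Polynomial.cyclotomic d ℤ).eval 2).toNat

open Finset Real

lemma cast_Phi2 (d : ℕ) : (Phi2 d : ℤ) = (Polynomial.cyclotomic d ℤ).eval 2 :=
  Int.toNat_of_nonneg (Polynomial.cyclotomic_pos' d one_lt_two).le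

lemma Phi2_pos (d : ℕ) : 0 < Phi2 d :=
  Int.lt_toNat.2 (Polynomial.cyclotomic_pos' d one_lt_two)

lemma prod_divisors_Phi2 {N : ℕ} (hN : 0 < N) : ∏ d ∈ N.divisors, Phi2 d = 2 ^ N - 1 := by
  apply Nat.cast_injective (R := ℤ)
  rw [Nat.cast_prod, Nat.cast_sub Nat.one_le_two_pow]
  simp only [cast_Phi2, ← Polynomial.eval_prod, Polynomial.prod_cyclotomic_eq_X_pow_sub_one hN]
  simp

lemma omega_prod_le_sum {ι : Type*} {s : Finset ι} {f : ι → ℕ} (hf : ∀ i ∈ s, f i ≠ 0) :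
    omega (∏ i ∈ s, f i) ≤ ∑ i ∈ s, omega (f i) := by
  classical
  simp only [omega, ← Nat.support_factorization, Nat.factorization_prod hf]
  exact (card_le_card Finsupp.support_finsetSum).trans card_biUnion_le

lemma omega_two_pow_sub_one_le {N : ℕ} (hN : 0 < N) :
    omega (2 ^ N - 1) ≤ ∑ d ∈ N.divisors, omega (Phi2 d) :=
  prod_divisors_Phi2 hN ▸ omega_prod_le_sum fun d _ => (Phi2_pos d).ne'

lemma tau_le_pow_omega (m : ℕ) : tau m ≤ (Nat.log 2 m + 1) ^ omega m := by
  rcases eq_or_ne m 0 with rfl | hm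
  · simp [tau]
  rw [tau, Nat.card_divisors hm]
  refine prod_le_pow_card _ _ _ fun p hp => Nat.add_le_add_right ?_ 1
  exact Nat.le_log_of_pow_le one_lt_two <|
    (Nat.pow_le_pow_left (Nat.prime_of_mem_primeFactors hp).two_le _).trans (Nat.ordProj_le p hm)

lemma tau_two_pow_sub_one_le (N : ℕ) : tau (2 ^ N - 1) ≤ N ^ omega (2 ^ N - 1) := by
  rcases eq_or_ne N 0 with rfl | hN
  · simp [tau]
  refine (tau_le_pow_omega _).trans (Nat.pow_le_pow_left ?_ _)
  exact Nat.log_lt_of_lt_pow' hN (Nat.sub_lt (Nat.two_pow_pos N) one_pos)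

lemma exists_le_const_add_of_eventually_le {f g : ℕ → ℝ} (hfg : ∀ᶠ n in Filter.atTop, f n ≤ g n)
    (hg : ∀ n, 0 ≤ g n) : ∃ K : ℝ, 0 ≤ K ∧ ∀ n, f n ≤ K + g n := by
  obtain ⟨n₀, hn₀⟩ := Filter.eventually_atTop.1 hfg
  refine ⟨∑ n ∈ range n₀, |f n|, sum_nonneg fun n _ => abs_nonneg (f n), fun n => ?_⟩
  rcases lt_or_ge n n₀ with hn | hn
  · calc f n ≤ |f n| := le_abs_self _
      _ ≤ ∑ n ∈ range n₀, |f n| := single_le_sum (fun n _ => abs_nonneg (f n)) (mem_range.2 hn)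
      _ ≤ _ := le_add_of_nonneg_right (hg n)
  · exact (hn₀ n hn).trans (le_add_of_nonneg_left (sum_nonneg fun n _ => abs_nonneg (f n)))

lemma omega_two_pow_sub_one_le_tau_mul {K c : ℝ} (hc : 0 ≤ c)
    (hK : ∀ d, (omega (Phi2 d) : ℝ) ≤ K + c * log d) {N : ℕ} (hN : 0 < N) :
    (omega (2 ^ N - 1) : ℝ) ≤ tau N * (K + c * log N) := by
  calc (omega (2 ^ N - 1) : ℝ) ≤ ∑ d ∈ N.divisors, (omega (Phi2 d) : ℝ) := by
        exact_mod_cast omega_two_pow_sub_one_le hN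
    _ ≤ ∑ _d ∈ N.divisors, (K + c * log N) := by
        refine sum_le_sum fun d hd => (hK d).trans ?_
        gcongr
        · exact_mod_cast Nat.pos_of_mem_divisors hd
        · exact_mod_cast Nat.divisor_le hd
    _ = tau N * (K + c * log N) := by rw [sum_const, nsmul_eq_mul, tau]

lemma const_add_mul_log_le {K : ℝ} (hK : 0 ≤ K) (c : ℝ) {x : ℝ} (hx : 2 ≤ x) :
    K + c * log x ≤ (K / log 2 + c) * log x := by
  rw [add_mul, div_mul_eq_mul_div]
  gcongr
  rw [le_div_iff₀ (log_pos one_lt_two)]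
  gcongr

lemma natCast_pow_eq_two_rpow {n : ℕ} (hn : 0 < n) (k : ℕ) :
    (n : ℝ) ^ k = 2 ^ (logb 2 n * k) := by
  rw [rpow_mul zero_le_two, rpow_logb two_pos one_lt_two.ne' (by exact_mod_cast hn),
    rpow_natCast]

/-- If `ω(Φ_d(2)) ≤ 10 log d` for all `d ≥ d₀`, then there is `C > 0` with
`τ(2^N - 1) ≤ 2^{C τ(N) (log N)²}` for all `N ≥ 2`. -/
theorem tau_mersenne_upper_bound_of_cyclotomic_conjecture
    (h : ∃ d₀ : ℕ, 2 ≤ d₀ ∧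
      ∀ d : ℕ, d₀ ≤ d → (omega (Phi2 d) : ℝ) ≤ 10 * Real.log d) :
    ∃ C : ℝ, 0 < C ∧ ∀ N : ℕ, 2 ≤ N →
      (tau (2 ^ N - 1) : ℝ)
        ≤ (2 : ℝ) ^ (C * (tau N : ℝ) * (Real.log N) ^ 2) := by
  obtain ⟨d₀, -, hd₀⟩ := h
  obtain ⟨K, hK, hωΦ⟩ := exists_le_const_add_of_eventually_le (Filter.eventually_atTop.2 ⟨d₀, hd₀⟩)
    fun d => mul_nonneg (by norm_num) (log_natCast_nonneg d)
  refine ⟨(K / log 2 + 10) / log 2, by positivity, fun N hN => ?_⟩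
  have hω : (omega (2 ^ N - 1) : ℝ) ≤ tau N * ((K / log 2 + 10) * log N) :=
    (omega_two_pow_sub_one_le_tau_mul (by norm_num) hωΦ (by omega)).trans <| by
      gcongr
      exact const_add_mul_log_le hK 10 (by exact_mod_cast hN)
  calc (tau (2 ^ N - 1) : ℝ) ≤ (N : ℝ) ^ omega (2 ^ N - 1) := by
        exact_mod_cast tau_two_pow_sub_one_le N
    _ = 2 ^ (logb 2 N * omega (2 ^ N - 1)) := natCast_pow_eq_two_rpow (by omega) _
    _ ≤ 2 ^ (logb 2 N * (tau N * ((K / log 2 + 10) * log N))) := by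
        gcongr
        · norm_num
        · exact logb_nonneg one_lt_two (by exact_mod_cast (by omega : 1 ≤ N))
    _ = 2 ^ ((K / log 2 + 10) / log 2 * tau N * log N ^ 2) := by congr 1; rw [logb]; ring
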